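/- Let α = 1 − 2√6/5 and define ψ : ℂ² → ℝ ∪ {−∞} by ψ(x, y) = log( |x|^{2α} + |y|² ). Call t > 0 a jumping number of ψ if there exist p, q ∈ ℕ such that the function (x,y) ↦ |x|^{2p} |y|^{2q} e^{−s ψ(x,y)} is integrable on the open unit polydisc of ℂ² for every s with 0 < s < t but is not integrable for s = t. Then the set of jumping numbers of ψ equals { m + n/α | m, n ∈ ℤ, m ≥ 1, n ≥ 1 }. -/

import Mathlib

open MeasureTheory

/-- The weight `ψ(x,y) = log(|x|^{2α} + |y|²)` with `α = 1 − 2√6/5` of Example 6.3. -/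
noncomputable def psiF (x : ℂ × ℂ) : ℝ :=
  Real.log (‖x.1‖ ^ (2 * (1 - 2 * Real.sqrt 6 / 5)) + ‖x.2‖ ^ 2)

/-!
On the unit polydisc, `‖x‖ ^ β + ‖y‖ ^ γ` is within a factor 2 of `‖x‖ ^ β` on the region
`‖y‖ ≤ ‖x‖ ^ (β / γ)` and of `‖y‖ ^ γ` on the mirror region `‖x‖ ≤ ‖y‖ ^ (γ / β)`, and these two
regions cover the polydisc. Integrating first in the inner variable, the homogeneity
`∫_{‖y‖ ≤ ρ} ‖y‖ ^ v = ρ ^ (v + dim) ∫_{‖y‖ ≤ 1} ‖y‖ ^ v` turns each region integral of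
`‖x‖ ^ a ‖y‖ ^ b (‖x‖ ^ β + ‖y‖ ^ γ) ^ (-s)` into the integral of a single power over a unit ball,
which is finite exactly when `s < (a + dim E) / β + (b + dim F) / γ`. As
`e^{-sψ} = (|x|^{2α} + |y|²)^{-s}`, the weight `|x|^{2p} |y|^{2q} e^{-sψ}` is integrable exactly
for `s < (p + 1) / α + (q + 1)`, so this number is its only jump.
-/

open Set Metric Module
open scoped ENNReal

namespace Real

theorem rpow_mul_add_rpow_neg_le {x c a β s : ℝ} (hx : 0 < x) (hc : 0 ≤ c) (hs : 0 ≤ s) :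
    x ^ a * (x ^ β + c) ^ (-s) ≤ x ^ (a - β * s) := by
  calc x ^ a * (x ^ β + c) ^ (-s) ≤ x ^ a * (x ^ β) ^ (-s) :=
        mul_le_mul_of_nonneg_left (rpow_le_rpow_of_nonpos (rpow_pos_of_pos hx β)
          (le_add_of_nonneg_right hc) (neg_nonpos.2 hs)) (rpow_nonneg hx.le a)
    _ = x ^ (a - β * s) := by rw [← rpow_mul hx.le, ← rpow_add hx]; ring_nf

theorem rpow_sub_mul_le_two_rpow_mul {x c a β s : ℝ} (hx : 0 < x) (hc : 0 ≤ c)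
    (hcx : c ≤ x ^ β) (hs : 0 ≤ s) :
    x ^ (a - β * s) ≤ 2 ^ s * (x ^ a * (x ^ β + c) ^ (-s)) := by
  have hxβ : 0 < x ^ β := rpow_pos_of_pos hx β
  calc x ^ (a - β * s) = 2 ^ s * 2 ^ (-s) * (x ^ a * (x ^ β) ^ (-s)) := by
        rw [← rpow_add two_pos, add_neg_cancel, rpow_zero, one_mul, ← rpow_mul hx.le,
          ← rpow_add hx]
        ring_nf
    _ = 2 ^ s * (x ^ a * (2 * x ^ β) ^ (-s)) := by
        rw [mul_rpow zero_le_two hxβ.le]; ring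
    _ ≤ 2 ^ s * (x ^ a * (x ^ β + c) ^ (-s)) :=
        mul_le_mul_of_nonneg_left (mul_le_mul_of_nonneg_left
          (rpow_le_rpow_of_nonpos (by positivity) (by linarith) (neg_nonpos.2 hs))
          (rpow_nonneg hx.le a)) (rpow_nonneg zero_le_two s)

theorem rpow_le_rpow_iff_le_rpow_div {x y β γ : ℝ} (hx : 0 ≤ x) (hy : 0 ≤ y) (hγ : 0 < γ) :
    y ^ γ ≤ x ^ β ↔ y ≤ x ^ (β / γ) := by
  rw [← rpow_le_rpow_iff hy (rpow_nonneg hx _) hγ, ← rpow_mul hx, div_mul_cancel₀ _ hγ.ne']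

end Real

section Radial

variable {E : Type*} [NormedAddCommGroup E] [NormedSpace ℝ E] [FiniteDimensional ℝ E]
  [MeasurableSpace E] [BorelSpace E] (μ : Measure E) [μ.IsAddHaarMeasure]

theorem lintegral_eq_ofReal_pow_mul_lintegral_comp_smul (f : E → ℝ≥0∞) {ρ : ℝ} (hρ : 0 < ρ) :
    ∫⁻ y, f y ∂μ = ENNReal.ofReal (ρ ^ finrank ℝ E) * ∫⁻ y, f (ρ • y) ∂μ := by
  let g : E ≃ᵐ E := (Homeomorph.smulOfNeZero ρ hρ.ne').toMeasurableEquiv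
  have hpow : 0 < ρ ^ finrank ℝ E := pow_pos hρ _
  have := lintegral_map_equiv f g (μ := μ)
  rw [show ⇑g = (ρ • ·) from rfl, Measure.map_addHaar_smul μ hρ.ne'] at this
  rw [← this, lintegral_smul_measure, smul_eq_mul, ← mul_assoc, ← ENNReal.ofReal_mul hpow.le,
    abs_of_pos (inv_pos.2 hpow), mul_inv_cancel₀ hpow.ne', ENNReal.ofReal_one, one_mul]

theorem lintegral_closedBall_norm_rpow (v : ℝ) {ρ : ℝ} (hρ : 0 < ρ) :
    ∫⁻ y in closedBall (0 : E) ρ, ENNReal.ofReal (‖y‖ ^ v) ∂μ =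
      ENNReal.ofReal (ρ ^ (v + finrank ℝ E)) *
        ∫⁻ y in closedBall (0 : E) 1, ENNReal.ofReal (‖y‖ ^ v) ∂μ := by
  rw [← lintegral_indicator measurableSet_closedBall,
    lintegral_eq_ofReal_pow_mul_lintegral_comp_smul μ _ hρ,
    ← lintegral_indicator measurableSet_closedBall,
    ← lintegral_const_mul' _ _ ENNReal.ofReal_ne_top,
    ← lintegral_const_mul' _ _ ENNReal.ofReal_ne_top]
  congr 1 with y
  by_cases hy : ‖y‖ ≤ 1
  · have hy' : ‖ρ • y‖ ≤ ρ := by rw [norm_smul, Real.norm_of_nonneg hρ.le]; nlinarith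
    rw [indicator_of_mem (mem_closedBall_zero_iff.2 hy'),
      indicator_of_mem (mem_closedBall_zero_iff.2 hy),
      ← ENNReal.ofReal_mul (by positivity), ← ENNReal.ofReal_mul (by positivity), norm_smul,
      Real.norm_of_nonneg hρ.le, Real.mul_rpow hρ.le (norm_nonneg y), ← mul_assoc,
      Real.rpow_add hρ, Real.rpow_natCast]
    ring_nf
  · have hy' : ¬ ‖ρ • y‖ ≤ ρ := by rw [norm_smul, Real.norm_of_nonneg hρ.le]; nlinarith
    rw [indicator_of_notMem (by simpa using hy'), indicator_of_notMem (by simpa using hy), mul_zero,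
      mul_zero]

variable [Nontrivial E]

theorem lintegral_ball_norm_rpow_lt_top_iff {v : ℝ} :
    ∫⁻ y in ball (0 : E) 1, ENNReal.ofReal (‖y‖ ^ v) ∂μ < ⊤ ↔ -(finrank ℝ E : ℝ) < v := by
  have hnonneg : 0 ≤ᵐ[μ.restrict (ball 0 1)] fun y : E => ‖y‖ ^ v :=
    .of_forall fun y => Real.rpow_nonneg (norm_nonneg y) v
  rw [lt_top_iff_ne_top, lintegral_ofReal_ne_top_iff_integrable
      (by fun_prop : Measurable fun y : E => ‖y‖ ^ v).aestronglyMeasurable hnonneg,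
    ← IntegrableOn, integrableOn_fun_norm_addHaar μ (f := fun r => r ^ v),
    integrableOn_congr_fun (g := fun r : ℝ => r ^ (v + finrank ℝ E - 1)) _ measurableSet_Ioo,
    intervalIntegral.integrableOn_Ioo_rpow_iff one_pos]
  · constructor <;> intro h <;> linarith
  · intro r hr
    simp only [smul_eq_mul]
    rw [← Real.rpow_natCast, ← Real.rpow_add hr.1, Nat.cast_sub Module.finrank_pos]
    ring_nf

theorem lintegral_closedBall_norm_rpow_lt_top {v : ℝ} (hv : -(finrank ℝ E : ℝ) < v) :
    ∫⁻ y in closedBall (0 : E) 1, ENNReal.ofReal (‖y‖ ^ v) ∂μ < ⊤ := by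
  have hae : ball (0 : E) 1 =ᵐ[μ] closedBall 0 1 :=
    ae_eq_of_subset_of_measure_ge ball_subset_closedBall
      (Measure.addHaar_closedBall_eq_addHaar_ball μ 0 1).le measurableSet_ball.nullMeasurableSet
      measure_closedBall_lt_top.ne
  rw [← Measure.restrict_congr_set hae]
  exact (lintegral_ball_norm_rpow_lt_top_iff μ).2 hv

theorem lintegral_closedBall_norm_rpow_ne_zero (v : ℝ) :
    ∫⁻ y in closedBall (0 : E) 1, ENNReal.ofReal (‖y‖ ^ v) ∂μ ≠ 0 := by
  refine ((setLIntegral_pos_iff (by fun_prop)).2 ?_).ne'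
  have hsub : closedBall (0 : E) 1 \ {0} ⊆
      Function.support (fun y : E => ENNReal.ofReal (‖y‖ ^ v)) ∩ closedBall 0 1 :=
    fun y ⟨hy, hy0⟩ => ⟨by simp [Real.rpow_pos_of_pos (norm_pos_iff.2 hy0)], hy⟩
  calc 0 < μ (closedBall (0 : E) 1 \ {0}) := by
        rw [measure_sdiff_null (measure_singleton 0)]; exact measure_closedBall_pos μ 0 one_pos
    _ ≤ _ := measure_mono hsub

end Radial

section Region

variable {E F : Type*} [NormedAddCommGroup E] [MeasurableSpace E] [BorelSpace E]
  [NormedAddCommGroup F] [MeasurableSpace F] [BorelSpace F]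

def rpowRegion (α : ℝ) : Set (E × F) := {z | ‖z.1‖ < 1 ∧ ‖z.2‖ ≤ ‖z.1‖ ^ α}

theorem measurableSet_rpowRegion (α : ℝ) : MeasurableSet (rpowRegion α : Set (E × F)) :=
  (measurableSet_lt (f := fun z : E × F => ‖z.1‖) (by fun_prop) measurable_const).inter
    (measurableSet_le (by fun_prop) (by fun_prop) : MeasurableSet {z : E × F | ‖z.2‖ ≤ ‖z.1‖ ^ α})

variable [NormedSpace ℝ E] [FiniteDimensional ℝ E] [Nontrivial E]
  (μ : Measure E) [μ.IsAddHaarMeasure]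
  [NormedSpace ℝ F] [FiniteDimensional ℝ F] (ν : Measure F) [ν.IsAddHaarMeasure]

theorem setLIntegral_rpowRegion (α u v : ℝ) :
    ∫⁻ z in rpowRegion α, ENNReal.ofReal (‖z.1‖ ^ u) * ENNReal.ofReal (‖z.2‖ ^ v) ∂μ.prod ν =
      (∫⁻ y in closedBall (0 : F) 1, ENNReal.ofReal (‖y‖ ^ v) ∂ν) *
        ∫⁻ x in ball (0 : E) 1, ENNReal.ofReal (‖x‖ ^ (u + α * (v + finrank ℝ F))) ∂μ := by
  set C := ∫⁻ y in closedBall (0 : F) 1, ENNReal.ofReal (‖y‖ ^ v) ∂ν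
  rw [← lintegral_indicator (measurableSet_rpowRegion α),
    lintegral_prod _
      ((Measurable.indicator (by fun_prop) (measurableSet_rpowRegion α)).aemeasurable),
    ← lintegral_const_mul _ (by fun_prop), ← lintegral_indicator measurableSet_ball]
  refine lintegral_congr_ae ?_
  filter_upwards [Measure.ae_ne μ 0] with x hx0
  have hx : 0 < ‖x‖ := norm_pos_iff.2 hx0
  by_cases hx1 : ‖x‖ < 1
  · have hslice : ∀ y, (rpowRegion α).indicator
          (fun z : E × F => ENNReal.ofReal (‖z.1‖ ^ u) * ENNReal.ofReal (‖z.2‖ ^ v)) (x, y) =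
        ENNReal.ofReal (‖x‖ ^ u) *
          (closedBall (0 : F) (‖x‖ ^ α)).indicator (fun y => ENNReal.ofReal (‖y‖ ^ v)) y := by
      intro y
      by_cases hy : ‖y‖ ≤ ‖x‖ ^ α
      · rw [indicator_of_mem (show (x, y) ∈ rpowRegion α from ⟨hx1, hy⟩),
          indicator_of_mem (mem_closedBall_zero_iff.2 hy)]
      · rw [indicator_of_notMem (show (x, y) ∉ rpowRegion α from fun h => hy h.2),
          indicator_of_notMem (by simpa using hy), mul_zero]
    rw [lintegral_congr hslice,
      lintegral_const_mul _ ((by fun_prop : Measurable _).indicator measurableSet_closedBall),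
      lintegral_indicator measurableSet_closedBall,
      lintegral_closedBall_norm_rpow ν v (Real.rpow_pos_of_pos hx α),
      indicator_of_mem (mem_ball_zero_iff.2 hx1), ← mul_assoc, mul_comm _ C,
      ← ENNReal.ofReal_mul (by positivity), ← Real.rpow_mul hx.le, ← Real.rpow_add hx]
  · have hslice : ∀ y, (rpowRegion α).indicator
          (fun z : E × F => ENNReal.ofReal (‖z.1‖ ^ u) * ENNReal.ofReal (‖z.2‖ ^ v)) (x, y) = 0 :=
      fun y => indicator_of_notMem (fun h => hx1 h.1) _
    rw [lintegral_congr hslice, lintegral_zero,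
      indicator_of_notMem (fun h => hx1 (mem_ball_zero_iff.1 h))]

variable [Nontrivial F]

theorem setLIntegral_rpowRegion_lt_top_iff {α u v : ℝ} (hv : -(finrank ℝ F : ℝ) < v) :
    ∫⁻ z in rpowRegion α, ENNReal.ofReal (‖z.1‖ ^ u) * ENNReal.ofReal (‖z.2‖ ^ v) ∂μ.prod ν < ⊤ ↔
      -(finrank ℝ E : ℝ) < u + α * (v + finrank ℝ F) := by
  rw [setLIntegral_rpowRegion, ← lintegral_ball_norm_rpow_lt_top_iff μ, lt_top_iff_ne_top,
    lt_top_iff_ne_top, Ne, ENNReal.mul_eq_top]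
  simp [(lintegral_closedBall_norm_rpow_lt_top ν hv).ne, lintegral_closedBall_norm_rpow_ne_zero ν v]

theorem setLIntegral_preimage_swap_rpowRegion_lt_top_iff {β u v : ℝ} (hu : -(finrank ℝ E : ℝ) < u) :
    ∫⁻ z in Prod.swap ⁻¹' rpowRegion β, ENNReal.ofReal (‖z.1‖ ^ u) * ENNReal.ofReal (‖z.2‖ ^ v)
        ∂μ.prod ν < ⊤ ↔
      -(finrank ℝ F : ℝ) < v + β * (u + finrank ℝ E) := by
  rw [← setLIntegral_rpowRegion_lt_top_iff ν μ hu (α := β) (u := v)]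
  simp_rw [mul_comm (ENNReal.ofReal (‖_‖ ^ v))]
  exact iff_of_eq <| congrArg (· < ⊤) <|
    Measure.measurePreserving_swap.setLIntegral_comp_preimage (measurableSet_rpowRegion β)
      (f := fun w : F × E => ENNReal.ofReal (‖w.2‖ ^ u) * ENNReal.ofReal (‖w.1‖ ^ v)) (by fun_prop)

end Region

theorem lt_div_add_div_iff_neg_lt {a b m n β γ s : ℝ} (hβ : 0 < β) (hγ : 0 < γ) :
    s < (a + m) / β + (b + n) / γ ↔ -m < a - β * s + β / γ * (b + n) := by
  have key : (a + m) / β + (b + n) / γ - s = (a - β * s + β / γ * (b + n) - -m) / β := by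
    field_simp; ring
  rw [← sub_pos, key, div_pos_iff_of_pos_right hβ, sub_pos]

section Weight

variable {E F : Type*} [NormedAddCommGroup E] [MeasurableSpace E] [BorelSpace E]
  [NormedSpace ℝ E] [FiniteDimensional ℝ E] [Nontrivial E] {μ : Measure E} [μ.IsAddHaarMeasure]
  [NormedAddCommGroup F] [MeasurableSpace F] [BorelSpace F]
  [NormedSpace ℝ F] [FiniteDimensional ℝ F] [Nontrivial F] {ν : Measure F} [ν.IsAddHaarMeasure]
  {a b β γ s : ℝ}

theorem lt_of_integrableOn_rpow_mul_add_rpow_neg (hβ : 0 < β) (hγ : 0 < γ)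
    (hb : -(finrank ℝ F : ℝ) < b) (hs : 0 ≤ s)
    (h : IntegrableOn (fun z : E × F => ‖z.1‖ ^ a * ‖z.2‖ ^ b * (‖z.1‖ ^ β + ‖z.2‖ ^ γ) ^ (-s))
      {z | ‖z.1‖ < 1 ∧ ‖z.2‖ < 1} (μ.prod ν)) :
    s < (a + finrank ℝ E) / β + (b + finrank ℝ F) / γ := by
  have hsub : rpowRegion (β / γ) ⊆ {z : E × F | ‖z.1‖ < 1 ∧ ‖z.2‖ < 1} := fun z hz =>
    ⟨hz.1, hz.2.trans_lt (Real.rpow_lt_one (norm_nonneg _) hz.1 (div_pos hβ hγ))⟩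
  have hfin := (hasFiniteIntegral_iff_ofReal (.of_forall fun z => by positivity)).1 h.2
  have hbound : ∀ᵐ z ∂(μ.prod ν).restrict (rpowRegion (β / γ)),
      ENNReal.ofReal (‖z.1‖ ^ (a - β * s)) * ENNReal.ofReal (‖z.2‖ ^ b) ≤
        ENNReal.ofReal (2 ^ s) *
          ENNReal.ofReal (‖z.1‖ ^ a * ‖z.2‖ ^ b * (‖z.1‖ ^ β + ‖z.2‖ ^ γ) ^ (-s)) := by
    filter_upwards [ae_restrict_mem (measurableSet_rpowRegion _),
      ae_restrict_of_ae (Measure.quasiMeasurePreserving_fst.ae (Measure.ae_ne μ 0))] with z hz hz0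
    have hle : ‖z.2‖ ^ γ ≤ ‖z.1‖ ^ β :=
      (Real.rpow_le_rpow_iff_le_rpow_div (norm_nonneg _) (norm_nonneg _) hγ).2 hz.2
    rw [← ENNReal.ofReal_mul (by positivity), ← ENNReal.ofReal_mul (by positivity)]
    refine ENNReal.ofReal_le_ofReal ?_
    calc ‖z.1‖ ^ (a - β * s) * ‖z.2‖ ^ b
        ≤ 2 ^ s * (‖z.1‖ ^ a * (‖z.1‖ ^ β + ‖z.2‖ ^ γ) ^ (-s)) * ‖z.2‖ ^ b :=
          mul_le_mul_of_nonneg_right (Real.rpow_sub_mul_le_two_rpow_mul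
            (norm_pos_iff.2 hz0) (by positivity) hle hs) (by positivity)
      _ = _ := by ring
  have hregion : ∫⁻ z in rpowRegion (β / γ),
      ENNReal.ofReal (‖z.1‖ ^ (a - β * s)) * ENNReal.ofReal (‖z.2‖ ^ b) ∂μ.prod ν < ⊤ :=
    calc _ ≤ ∫⁻ z in rpowRegion (β / γ), ENNReal.ofReal (2 ^ s) *
          ENNReal.ofReal (‖z.1‖ ^ a * ‖z.2‖ ^ b * (‖z.1‖ ^ β + ‖z.2‖ ^ γ) ^ (-s)) ∂μ.prod ν :=
          lintegral_mono_ae hbound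
      _ ≤ ENNReal.ofReal (2 ^ s) * ∫⁻ z in {z : E × F | ‖z.1‖ < 1 ∧ ‖z.2‖ < 1},
          ENNReal.ofReal (‖z.1‖ ^ a * ‖z.2‖ ^ b * (‖z.1‖ ^ β + ‖z.2‖ ^ γ) ^ (-s)) ∂μ.prod ν := by
          rw [lintegral_const_mul' _ _ ENNReal.ofReal_ne_top]
          gcongr
      _ < ⊤ := ENNReal.mul_lt_top ENNReal.ofReal_lt_top hfin
  exact (lt_div_add_div_iff_neg_lt hβ hγ).2 ((setLIntegral_rpowRegion_lt_top_iff μ ν hb).1 hregion)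

theorem integrableOn_rpow_mul_add_rpow_neg_of_lt (hβ : 0 < β) (hγ : 0 < γ)
    (ha : -(finrank ℝ E : ℝ) < a) (hb : -(finrank ℝ F : ℝ) < b) (hs : 0 ≤ s)
    (h : s < (a + finrank ℝ E) / β + (b + finrank ℝ F) / γ) :
    IntegrableOn (fun z : E × F => ‖z.1‖ ^ a * ‖z.2‖ ^ b * (‖z.1‖ ^ β + ‖z.2‖ ^ γ) ^ (-s))
      {z | ‖z.1‖ < 1 ∧ ‖z.2‖ < 1} (μ.prod ν) := by
  set w := fun z : E × F => ‖z.1‖ ^ a * ‖z.2‖ ^ b * (‖z.1‖ ^ β + ‖z.2‖ ^ γ) ^ (-s)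
  have hcover : {z : E × F | ‖z.1‖ < 1 ∧ ‖z.2‖ < 1} ⊆
      rpowRegion (β / γ) ∪ Prod.swap ⁻¹' rpowRegion (γ / β) := by
    rintro z ⟨hz1, hz2⟩
    rcases le_total (‖z.2‖ ^ γ) (‖z.1‖ ^ β) with hle | hle
    · exact .inl ⟨hz1, (Real.rpow_le_rpow_iff_le_rpow_div (norm_nonneg _) (norm_nonneg _) hγ).1 hle⟩
    · exact .inr ⟨hz2, (Real.rpow_le_rpow_iff_le_rpow_div (norm_nonneg _) (norm_nonneg _) hβ).1 hle⟩
  have hbound₁ : ∀ᵐ z ∂μ.prod ν, ENNReal.ofReal (w z) ≤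
      ENNReal.ofReal (‖z.1‖ ^ (a - β * s)) * ENNReal.ofReal (‖z.2‖ ^ b) := by
    filter_upwards [Measure.quasiMeasurePreserving_fst.ae (Measure.ae_ne μ 0)] with z hz0
    rw [← ENNReal.ofReal_mul (by positivity)]
    refine ENNReal.ofReal_le_ofReal ?_
    calc w z = ‖z.1‖ ^ a * (‖z.1‖ ^ β + ‖z.2‖ ^ γ) ^ (-s) * ‖z.2‖ ^ b := by ring
      _ ≤ _ := mul_le_mul_of_nonneg_right (Real.rpow_mul_add_rpow_neg_le
            (norm_pos_iff.2 hz0) (by positivity) hs) (by positivity)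
  have hbound₂ : ∀ᵐ z ∂μ.prod ν, ENNReal.ofReal (w z) ≤
      ENNReal.ofReal (‖z.1‖ ^ a) * ENNReal.ofReal (‖z.2‖ ^ (b - γ * s)) := by
    filter_upwards [Measure.quasiMeasurePreserving_snd.ae (Measure.ae_ne ν 0)] with z hz0
    rw [← ENNReal.ofReal_mul (by positivity)]
    refine ENNReal.ofReal_le_ofReal ?_
    calc w z = ‖z.2‖ ^ b * (‖z.2‖ ^ γ + ‖z.1‖ ^ β) ^ (-s) * ‖z.1‖ ^ a := by
          simp only [w]; rw [add_comm]; ring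
      _ ≤ _ := by
          rw [mul_comm (‖z.1‖ ^ a)]
          exact mul_le_mul_of_nonneg_right (Real.rpow_mul_add_rpow_neg_le
            (norm_pos_iff.2 hz0) (by positivity) hs) (by positivity)
  have hfin₁ := (setLIntegral_rpowRegion_lt_top_iff μ ν hb (α := β / γ)).2
    ((lt_div_add_div_iff_neg_lt hβ hγ).1 h)
  have hfin₂ := (setLIntegral_preimage_swap_rpowRegion_lt_top_iff μ ν ha (β := γ / β)).2
    ((lt_div_add_div_iff_neg_lt hγ hβ).1 (add_comm ((a + finrank ℝ E) / β) _ ▸ h))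
  refine ⟨(by fun_prop : Measurable w).aestronglyMeasurable,
    (hasFiniteIntegral_iff_ofReal (.of_forall fun z => by positivity)).2 ?_⟩
  calc ∫⁻ z in {z : E × F | ‖z.1‖ < 1 ∧ ‖z.2‖ < 1}, ENNReal.ofReal (w z) ∂μ.prod ν
      ≤ ∫⁻ z in rpowRegion (β / γ) ∪ Prod.swap ⁻¹' rpowRegion (γ / β), ENNReal.ofReal (w z)
          ∂μ.prod ν := lintegral_mono_set hcover
    _ ≤ (∫⁻ z in rpowRegion (β / γ), ENNReal.ofReal (w z) ∂μ.prod ν) +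
          ∫⁻ z in Prod.swap ⁻¹' rpowRegion (γ / β), ENNReal.ofReal (w z) ∂μ.prod ν :=
        lintegral_union_le _ _ _
    _ < ⊤ := ENNReal.add_lt_top.2
        ⟨(lintegral_mono_ae (ae_restrict_of_ae hbound₁)).trans_lt hfin₁,
          (lintegral_mono_ae (ae_restrict_of_ae hbound₂)).trans_lt hfin₂⟩

theorem integrableOn_rpow_mul_add_rpow_neg_iff (hβ : 0 < β) (hγ : 0 < γ)
    (ha : -(finrank ℝ E : ℝ) < a) (hb : -(finrank ℝ F : ℝ) < b) (hs : 0 ≤ s) :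
    IntegrableOn (fun z : E × F => ‖z.1‖ ^ a * ‖z.2‖ ^ b * (‖z.1‖ ^ β + ‖z.2‖ ^ γ) ^ (-s))
      {z | ‖z.1‖ < 1 ∧ ‖z.2‖ < 1} (μ.prod ν) ↔
      s < (a + finrank ℝ E) / β + (b + finrank ℝ F) / γ :=
  ⟨lt_of_integrableOn_rpow_mul_add_rpow_neg hβ hγ hb hs,
    integrableOn_rpow_mul_add_rpow_neg_of_lt hβ hγ ha hb hs⟩

end Weight

theorem one_sub_two_mul_sqrt_six_div_five_pos : (0 : ℝ) < 1 - 2 * Real.sqrt 6 / 5 := by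
  have : Real.sqrt 6 < 5 / 2 := (Real.sqrt_lt' (by norm_num)).2 (by norm_num)
  linarith

theorem integrableOn_polydisc_psiF_iff (p q : ℕ) {s : ℝ} (hs : 0 < s) :
    IntegrableOn (fun x : ℂ × ℂ =>
        ‖x.1‖ ^ (2 * (p : ℝ)) * ‖x.2‖ ^ (2 * (q : ℝ)) * Real.exp (-(s * psiF x)))
      {x : ℂ × ℂ | ‖x.1‖ < 1 ∧ ‖x.2‖ < 1} volume ↔
      s < ((p : ℝ) + 1) / (1 - 2 * Real.sqrt 6 / 5) + ((q : ℝ) + 1) := by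
  have hα := one_sub_two_mul_sqrt_six_div_five_pos
  have hweight : ∀ᵐ x : ℂ × ℂ ∂volume, Real.exp (-(s * psiF x)) =
      (‖x.1‖ ^ (2 * (1 - 2 * Real.sqrt 6 / 5)) + ‖x.2‖ ^ (2 : ℝ)) ^ (-s) := by
    filter_upwards [Measure.quasiMeasurePreserving_fst.ae (Measure.ae_ne volume 0)] with x hx
    have hpos : 0 < ‖x.1‖ ^ (2 * (1 - 2 * Real.sqrt 6 / 5)) + ‖x.2‖ ^ (2 : ℝ) :=
      add_pos_of_pos_of_nonneg (Real.rpow_pos_of_pos (norm_pos_iff.2 hx) _) (by positivity)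
    rw [Real.rpow_def_of_pos hpos, psiF, Real.rpow_two, mul_neg, mul_comm]
  have hexp (n : ℕ) : -(finrank ℝ ℂ : ℝ) < 2 * n := by
    rw [Complex.finrank_real_complex]; push_cast; linarith [n.cast_nonneg (α := ℝ)]
  rw [integrableOn_congr_fun_ae (ae_restrict_of_ae (hweight.mono fun x hx => by rw [hx])),
    Measure.volume_eq_prod, integrableOn_rpow_mul_add_rpow_neg_iff (by positivity) two_pos
      (hexp p) (hexp q) hs.le, Complex.finrank_real_complex]
  convert Iff.rfl using 2
  push_cast
  field_simp

theorem jump_iff_eq_of_forall_pos_iff_lt {P : ℝ → Prop} {c t : ℝ} (hc : 0 < c)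
    (hP : ∀ s, 0 < s → (P s ↔ s < c)) :
    (0 < t ∧ (∀ s, 0 < s → s < t → P s) ∧ ¬ P t) ↔ t = c := by
  constructor
  · rintro ⟨ht, hlt, hnot⟩
    refine le_antisymm (not_lt.1 fun hct => ?_) (not_lt.1 fun htc => hnot ((hP t ht).2 htc))
    exact lt_irrefl c ((hP c hc).1 (hlt c hc hct))
  · rintro rfl
    exact ⟨hc, fun s hs hsc => (hP s hs).2 hsc, fun h => lt_irrefl t ((hP t hc).1 h)⟩

/-- The jumping numbers of `ψ(x,y) = log(|x|^{2α} + |y|²)`, `α = 1 − 2√6/5`,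
are exactly the numbers `m + n/α` with `m, n ∈ ℤ`, `m, n ≥ 1`. -/
theorem stmt_16 :
    {t : ℝ | 0 < t ∧ ∃ p q : ℕ,
        (∀ s : ℝ, 0 < s → s < t →
          IntegrableOn (fun x : ℂ × ℂ =>
              ‖x.1‖ ^ (2 * (p : ℝ)) * ‖x.2‖ ^ (2 * (q : ℝ)) *
                Real.exp (-(s * psiF x)))
            {x : ℂ × ℂ | ‖x.1‖ < 1 ∧ ‖x.2‖ < 1} volume) ∧
        ¬ IntegrableOn (fun x : ℂ × ℂ =>
              ‖x.1‖ ^ (2 * (p : ℝ)) * ‖x.2‖ ^ (2 * (q : ℝ)) *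
                Real.exp (-(t * psiF x)))
            {x : ℂ × ℂ | ‖x.1‖ < 1 ∧ ‖x.2‖ < 1} volume}
      = {T : ℝ | ∃ m n : ℤ, 1 ≤ m ∧ 1 ≤ n ∧
          T = (m : ℝ) + (n : ℝ) / (1 - 2 * Real.sqrt 6 / 5)} := by
  have hα := one_sub_two_mul_sqrt_six_div_five_pos
  have hthreshold_pos (p q : ℕ) :
      0 < ((p : ℝ) + 1) / (1 - 2 * Real.sqrt 6 / 5) + ((q : ℝ) + 1) := by
    positivity
  ext t
  constructor
  · rintro ⟨ht, p, q, hint, hnot⟩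
    have ht_eq := (jump_iff_eq_of_forall_pos_iff_lt (hthreshold_pos p q)
      fun s hs => integrableOn_polydisc_psiF_iff p q hs).1 ⟨ht, hint, hnot⟩
    exact ⟨q + 1, p + 1, by omega, by omega, by push_cast; linarith⟩
  · rintro ⟨m, n, hm, hn, rfl⟩
    obtain ⟨q, hq⟩ := Int.eq_ofNat_of_zero_le (by omega : 0 ≤ m - 1)
    obtain ⟨p, hp⟩ := Int.eq_ofNat_of_zero_le (by omega : 0 ≤ n - 1)
    have hmn : (m : ℝ) + n / (1 - 2 * Real.sqrt 6 / 5) =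
        ((p : ℝ) + 1) / (1 - 2 * Real.sqrt 6 / 5) + ((q : ℝ) + 1) := by
      rw [show m = q + 1 by omega, show n = p + 1 by omega]; push_cast; ring
    obtain ⟨ht, hint, hnot⟩ := (jump_iff_eq_of_forall_pos_iff_lt (hthreshold_pos p q)
      fun s hs => integrableOn_polydisc_psiF_iff p q hs).2 hmn
    exact ⟨ht, p, q, hint, hnot⟩
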